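/- arXiv:2202.09828 — 7 statements merged into one kernel-verified Lean document; each statement's English description precedes it below -/
import Mathlib

section
/- Let T(x,y) = ( (1+y)(1+x−xy)² / ((1+x)(−1−y+xy)(1+x−y²)), (x−y)²(1+x+y) / ((1+y−x²)(1+x−y²)) ) and I(x,y) = (x+1)(y+1)(x+y+1)/(xy). Then for all real x, y at which these expressions are defined (all relevant denominators and the values x, y, x̄, ȳ nonzero), I(x,y) · I(T(x,y)) = −1. -/
/-- The projective evolute map on the moduli space of pentagons. -/
noncomputable def Tmap (x y : ℝ) : ℝ × ℝ :=
  ((1 + y) * (1 + x - x * y) ^ 2 / ((1 + x) * (-1 - y + x * y) * (1 + x - y ^ 2)),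
   (x - y) ^ 2 * (1 + x + y) / ((1 + y - x ^ 2) * (1 + x - y ^ 2)))

/-- The invariant `I`. -/
noncomputable def Imap (x y : ℝ) : ℝ := (x + 1) * (y + 1) * (x + y + 1) / (x * y)

theorem stmt0 (x y : ℝ) (hx : x ≠ 0) (hy : y ≠ 0)
    (h1 : 1 + x ≠ 0) (h2 : -1 - y + x * y ≠ 0) (h3 : 1 + x - y ^ 2 ≠ 0)
    (h4 : 1 + y - x ^ 2 ≠ 0)
    (hxb : (Tmap x y).1 ≠ 0) (hyb : (Tmap x y).2 ≠ 0) :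
    Imap x y * Imap (Tmap x y).1 (Tmap x y).2 = -1 := by
  simp only [Tmap] at hxb hyb ⊢
  have hn1 : (1 + y) * (1 + x - x * y) ^ 2 ≠ 0 := fun h => hxb (by rw [h]; simp)
  have hn2 : (x - y) ^ 2 * (1 + x + y) ≠ 0 := fun h => hyb (by rw [h]; simp)
  simp only [Imap]
  rw [div_mul_div_comm, div_eq_iff (mul_ne_zero (mul_ne_zero hx hy) (mul_ne_zero hxb hyb))]
  field_simp
  ring
end

section
/- With T and I as above, I ∘ T² = I wherever both sides are defined: if (x̄,ȳ) = T(x,y) and (x̿,y̿) = T(x̄,ȳ), and all denominators involved are nonzero, then I(x̿,y̿) = I(x,y). -/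
set_option maxHeartbeats 2000000 in
/-- One step of the evolute map inverts the invariant up to sign (cleared form). -/
lemma key_step (x y xb yb : ℝ)
    (h1 : 1 + x ≠ 0) (h2 : -1 - y + x * y ≠ 0) (h3 : 1 + x - y ^ 2 ≠ 0)
    (h4 : 1 + y - x ^ 2 ≠ 0)
    (e1 : (1 + y) * (1 + x - x * y) ^ 2 / ((1 + x) * (-1 - y + x * y) * (1 + x - y ^ 2)) = xb)
    (e2 : (x - y) ^ 2 * (1 + x + y) / ((1 + y - x ^ 2) * (1 + x - y ^ 2)) = yb) :
    ((xb + 1) * (yb + 1) * (xb + yb + 1)) * ((x + 1) * (y + 1) * (x + y + 1))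
      = -(x * y * (xb * yb)) := by
  subst e1 e2
  have h2'' : -1 - y + y * x ≠ 0 := by rwa [mul_comm] at h2
  field_simp
  ring

theorem stmt1 (x y xb yb xbb ybb : ℝ)
    (hT1 : Tmap x y = (xb, yb)) (hT2 : Tmap xb yb = (xbb, ybb))
    (hx : x ≠ 0) (hy : y ≠ 0) (hxb : xb ≠ 0) (hyb : yb ≠ 0)
    (hxbb : xbb ≠ 0) (hybb : ybb ≠ 0)
    (h1 : 1 + x ≠ 0) (h2 : -1 - y + x * y ≠ 0) (h3 : 1 + x - y ^ 2 ≠ 0)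
    (h4 : 1 + y - x ^ 2 ≠ 0)
    (h1' : 1 + xb ≠ 0) (h2' : -1 - yb + xb * yb ≠ 0) (h3' : 1 + xb - yb ^ 2 ≠ 0)
    (h4' : 1 + yb - xb ^ 2 ≠ 0) :
    Imap xbb ybb = Imap x y := by
  simp only [Tmap, Prod.mk.injEq] at hT1 hT2
  obtain ⟨e1, e2⟩ := hT1
  obtain ⟨e3, e4⟩ := hT2
  have k1 := key_step x y xb yb h1 h2 h3 h4 e1 e2
  have k2 := key_step xb yb xbb ybb h1' h2' h3' h4' e3 e4
  have m1 : Imap xb yb * Imap x y = -1 := by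
    simp only [Imap]
    field_simp
    linear_combination k1
  have m2 : Imap xbb ybb * Imap xb yb = -1 := by
    simp only [Imap]
    field_simp
    linear_combination k2
  have hI2 : Imap xb yb ≠ 0 := by
    intro h
    rw [h, zero_mul] at m1
    norm_num at m1
  refine mul_right_cancel₀ hI2 ?_
  rw [m2, ← m1]
  ring
end

section
/- Let J(x,y) denote the Jacobian determinant of the map T² at (x,y), and (x̿,y̿) = T²(x,y). Then wherever defined, J(x,y)/(x̿·y̿) = −4/(xy). Equivalently, T² pulls back the 2-form ω = (1/(xy)) dx∧dy to −4ω. -/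
/-- First component of the projective evolute map. -/
noncomputable def Tx (x y : ℝ) : ℝ :=
  (1 + y) * (1 + x - x * y) ^ 2 / ((1 + x) * (-1 - y + x * y) * (1 + x - y ^ 2))

/-- Second component of the projective evolute map. -/
noncomputable def Ty (x y : ℝ) : ℝ :=
  (x - y) ^ 2 * (1 + x + y) / ((1 + y - x ^ 2) * (1 + x - y ^ 2))

/-- First component of the second iterate `T²`. -/
noncomputable def T2x (x y : ℝ) : ℝ := Tx (Tx x y) (Ty x y)

/-- Second component of the second iterate `T²`. -/
noncomputable def T2y (x y : ℝ) : ℝ := Ty (Tx x y) (Ty x y)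

/-- Jacobian determinant of `T²`. -/
noncomputable def Jac (x y : ℝ) : ℝ :=
  deriv (fun s => T2x s y) x * deriv (fun t => T2y x t) y -
    deriv (fun t => T2x x t) y * deriv (fun s => T2y s y) x

/- ### Auxiliary definitions: explicit partial derivatives of `Tx` and `Ty`. -/

noncomputable def Txu (x y : ℝ) : ℝ :=
  ((1 + y) * (2 * (1 + x - x * y) * (1 - y)) * ((1 + x) * (-1 - y + x * y) * (1 + x - y ^ 2))
    - (1 + y) * (1 + x - x * y) ^ 2 *
      ((-1 - y + x * y) * (1 + x - y ^ 2) + (1 + x) * (y * (1 + x - y ^ 2) + (-1 - y + x * y))))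
  / ((1 + x) * (-1 - y + x * y) * (1 + x - y ^ 2)) ^ 2

noncomputable def Txv (x y : ℝ) : ℝ :=
  (((1 + x - x * y) ^ 2 + (1 + y) * (2 * (1 + x - x * y) * (0 - x))) *
      ((1 + x) * (-1 - y + x * y) * (1 + x - y ^ 2))
    - (1 + y) * (1 + x - x * y) ^ 2 *
      ((1 + x) * ((-1 + x) * (1 + x - y ^ 2) + (-1 - y + x * y) * (-(2 * y)))))
  / ((1 + x) * (-1 - y + x * y) * (1 + x - y ^ 2)) ^ 2

noncomputable def Tyu (x y : ℝ) : ℝ :=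
  ((2 * (x - y) * (1 + x + y) + (x - y) ^ 2) * ((1 + y - x ^ 2) * (1 + x - y ^ 2))
    - (x - y) ^ 2 * (1 + x + y) *
      ((0 - 2 * x) * (1 + x - y ^ 2) + (1 + y - x ^ 2)))
  / ((1 + y - x ^ 2) * (1 + x - y ^ 2)) ^ 2

noncomputable def Tyv (x y : ℝ) : ℝ :=
  (((0 - 2) * (x - y) * (1 + x + y) + (x - y) ^ 2) * ((1 + y - x ^ 2) * (1 + x - y ^ 2))
    - (x - y) ^ 2 * (1 + x + y) *
      ((1 + x - y ^ 2) + (1 + y - x ^ 2) * (0 - 2 * y)))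
  / ((1 + y - x ^ 2) * (1 + x - y ^ 2)) ^ 2

/-- Chain rule for `Tx` along a curve. -/
lemma hasDerivAt_Tx_comp {A B : ℝ → ℝ} {a b x : ℝ}
    (hA : HasDerivAt A a x) (hB : HasDerivAt B b x)
    (e1 : 1 + A x ≠ 0) (e2 : -1 - B x + A x * B x ≠ 0) (e3 : 1 + A x - (B x) ^ 2 ≠ 0) :
    HasDerivAt (fun s => Tx (A s) (B s)) (Txu (A x) (B x) * a + Txv (A x) (B x) * b) x := by
  have hD : (1 + A x) * (-1 - B x + A x * B x) * (1 + A x - (B x) ^ 2) ≠ 0 :=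
    mul_ne_zero (mul_ne_zero e1 e2) e3
  have hnum : HasDerivAt (fun s => (1 + B s) * (1 + A s - A s * B s) ^ 2)
      (b * (1 + A x - A x * B x) ^ 2 +
        (1 + B x) * (2 * (1 + A x - A x * B x) ^ 1 * (a - (a * B x + A x * b)))) x := by
    have h0 : HasDerivAt (fun s => (1 : ℝ) + B s) b x := hB.const_add 1
    have h1 : HasDerivAt (fun s => (1 : ℝ) + A s - A s * B s) (a - (a * B x + A x * b)) x :=
      ((hA.const_add 1).sub (hA.mul hB))
    exact (h0.mul (h1.pow 2)).congr_deriv (by norm_num)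
  have hden : HasDerivAt (fun s => (1 + A s) * (-1 - B s + A s * B s) * (1 + A s - (B s) ^ 2))
      ((a * (-1 - B x + A x * B x) + (1 + A x) * (-b + (a * B x + A x * b))) *
          (1 + A x - (B x) ^ 2) +
        (1 + A x) * (-1 - B x + A x * B x) * (a - 2 * (B x) ^ 1 * b)) x := by
    have h1 : HasDerivAt (fun s => (1 : ℝ) + A s) a x := hA.const_add 1
    have h2 : HasDerivAt (fun s => -1 - B s + A s * B s) (-b + (a * B x + A x * b)) x :=
      ((hB.const_sub (-1)).add (hA.mul hB))
    have h3 : HasDerivAt (fun s => (1 : ℝ) + A s - (B s) ^ 2) (a - 2 * (B x) ^ 1 * b) x := by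
      exact ((hA.const_add 1).sub (hB.pow 2)).congr_deriv (by norm_num)
    exact (h1.mul h2).mul h3
  have h := hnum.div hden hD
  have : (fun s => Tx (A s) (B s)) =
      fun s => (1 + B s) * (1 + A s - A s * B s) ^ 2 /
        ((1 + A s) * (-1 - B s + A s * B s) * (1 + A s - (B s) ^ 2)) := by
    funext s; simp [Tx]
  rw [this]
  refine h.congr_deriv ?_
  rw [Txu, Txv]
  field_simp
  ring

/-- Chain rule for `Ty` along a curve. -/
lemma hasDerivAt_Ty_comp {A B : ℝ → ℝ} {a b x : ℝ}
    (hA : HasDerivAt A a x) (hB : HasDerivAt B b x)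
    (e4 : 1 + B x - (A x) ^ 2 ≠ 0) (e3 : 1 + A x - (B x) ^ 2 ≠ 0) :
    HasDerivAt (fun s => Ty (A s) (B s)) (Tyu (A x) (B x) * a + Tyv (A x) (B x) * b) x := by
  have hD : (1 + B x - (A x) ^ 2) * (1 + A x - (B x) ^ 2) ≠ 0 := mul_ne_zero e4 e3
  have hnum : HasDerivAt (fun s => (A s - B s) ^ 2 * (1 + A s + B s))
      (2 * (A x - B x) ^ 1 * (a - b) * (1 + A x + B x) + (A x - B x) ^ 2 * (a + b)) x := by
    have h1 : HasDerivAt (fun s => (A s - B s) ^ 2) (2 * (A x - B x) ^ 1 * (a - b)) x := by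
      exact ((hA.sub hB).pow 2).congr_deriv (by norm_num)
    have h2 : HasDerivAt (fun s => (1 : ℝ) + A s + B s) (a + b) x :=
      ((hA.const_add 1).add hB)
    exact h1.mul h2
  have hden : HasDerivAt (fun s => (1 + B s - (A s) ^ 2) * (1 + A s - (B s) ^ 2))
      ((b - 2 * (A x) ^ 1 * a) * (1 + A x - (B x) ^ 2) +
        (1 + B x - (A x) ^ 2) * (a - 2 * (B x) ^ 1 * b)) x := by
    have h1 : HasDerivAt (fun s => (1 : ℝ) + B s - (A s) ^ 2) (b - 2 * (A x) ^ 1 * a) x := by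
      exact ((hB.const_add 1).sub (hA.pow 2)).congr_deriv (by norm_num)
    have h2 : HasDerivAt (fun s => (1 : ℝ) + A s - (B s) ^ 2) (a - 2 * (B x) ^ 1 * b) x := by
      exact ((hA.const_add 1).sub (hB.pow 2)).congr_deriv (by norm_num)
    exact h1.mul h2
  have h := hnum.div hden hD
  have : (fun s => Ty (A s) (B s)) =
      fun s => (A s - B s) ^ 2 * (1 + A s + B s) /
        ((1 + B s - (A s) ^ 2) * (1 + A s - (B s) ^ 2)) := by
    funext s; simp [Ty]
  rw [this]
  refine h.congr_deriv ?_
  rw [Tyu, Tyv]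
  field_simp
  ring

/-- One-step Jacobian identity. -/
lemma jac_one_step (x y : ℝ)
    (h1 : 1 + x ≠ 0) (h2 : -1 - y + x * y ≠ 0) (h3 : 1 + x - y ^ 2 ≠ 0)
    (h4 : 1 + y - x ^ 2 ≠ 0) :
    Txu x y * Tyv x y - Txv x y * Tyu x y =
      2 * (1 + x - x * y) ^ 2 * (x - y) ^ 2 /
        ((1 + x) * ((1 + x) * (-1 - y + x * y) * (1 + x - y ^ 2)) *
          ((1 + y - x ^ 2) * (1 + x - y ^ 2))) := by
  rw [Txu, Txv, Tyu, Tyv]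
  have h2'' : -1 - y + y * x ≠ 0 := by rwa [mul_comm y x]
  field_simp
  ring

/-- Dividing the one-step Jacobian at `(u,v)` by `T(u,v)`. -/
lemma assemble (u v J : ℝ) (h1' : 1 + u ≠ 0) (h2' : -1 - v + u * v ≠ 0)
    (h3' : 1 + u - v ^ 2 ≠ 0) (h4' : 1 + v - u ^ 2 ≠ 0)
    (hv : 1 + v ≠ 0) (hw : 1 + u - u * v ≠ 0) (hz : u - v ≠ 0) (hs : 1 + u + v ≠ 0) :
    2 * (1 + u - u * v) ^ 2 * (u - v) ^ 2 /
        ((1 + u) * ((1 + u) * (-1 - v + u * v) * (1 + u - v ^ 2)) *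
          ((1 + v - u ^ 2) * (1 + u - v ^ 2))) * J /
      ((1 + v) * (1 + u - u * v) ^ 2 / ((1 + u) * (-1 - v + u * v) * (1 + u - v ^ 2)) *
        ((u - v) ^ 2 * (1 + u + v) / ((1 + v - u ^ 2) * (1 + u - v ^ 2)))) =
    2 * J / ((1 + u) * ((1 + v) * (1 + u + v))) := by
  field_simp

/-- `T²` pulls back `ω = dx∧dy/(xy)` to `-4ω`: `J(x,y)/(x̿ ȳ̿) = -4/(xy)`. -/
theorem stmt2 (x y : ℝ) (hx : x ≠ 0) (hy : y ≠ 0)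
    (h1 : 1 + x ≠ 0) (h2 : -1 - y + x * y ≠ 0) (h3 : 1 + x - y ^ 2 ≠ 0)
    (h4 : 1 + y - x ^ 2 ≠ 0)
    (h1' : 1 + Tx x y ≠ 0) (h2' : -1 - Ty x y + Tx x y * Ty x y ≠ 0)
    (h3' : 1 + Tx x y - (Ty x y) ^ 2 ≠ 0) (h4' : 1 + Ty x y - (Tx x y) ^ 2 ≠ 0)
    (hxbb : T2x x y ≠ 0) (hybb : T2y x y ≠ 0) :
    Jac x y / (T2x x y * T2y x y) = -4 / (x * y) := by
  set u := Tx x y with hu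
  set v := Ty x y with hv
  have hT2x : T2x x y = (1 + v) * (1 + u - u * v) ^ 2 /
      ((1 + u) * (-1 - v + u * v) * (1 + u - v ^ 2)) := rfl
  have hT2y : T2y x y = (u - v) ^ 2 * (1 + u + v) /
      ((1 + v - u ^ 2) * (1 + u - v ^ 2)) := rfl
  -- nonvanishing facts coming from `T2x x y ≠ 0`, `T2y x y ≠ 0`
  have hvne : 1 + v ≠ 0 := by
    intro h; apply hxbb
    have hz : (1 + v) * (1 + u - u * v) ^ 2 = 0 := by rw [h]; ring
    rw [hT2x, hz, zero_div]
  have hwne : 1 + u - u * v ≠ 0 := by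
    intro h; apply hxbb
    have hz : (1 + v) * (1 + u - u * v) ^ 2 = 0 := by rw [h]; ring
    rw [hT2x, hz, zero_div]
  have hzne : u - v ≠ 0 := by
    intro h; apply hybb
    have hz : (u - v) ^ 2 * (1 + u + v) = 0 := by rw [h]; ring
    rw [hT2y, hz, zero_div]
  have hsne : 1 + u + v ≠ 0 := by
    intro h; apply hybb
    have hz : (u - v) ^ 2 * (1 + u + v) = 0 := by rw [h]; ring
    rw [hT2y, hz, zero_div]
  -- the four partial derivatives of `T²`
  have hA1 : HasDerivAt (fun s => Tx s y) (Txu x y * 1 + Txv x y * 0) x :=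
    hasDerivAt_Tx_comp (hasDerivAt_id x) (hasDerivAt_const x y) h1 h2 h3
  have hB1 : HasDerivAt (fun s => Ty s y) (Tyu x y * 1 + Tyv x y * 0) x :=
    hasDerivAt_Ty_comp (hasDerivAt_id x) (hasDerivAt_const x y) h4 h3
  have hA2 : HasDerivAt (fun t => Tx x t) (Txu x y * 0 + Txv x y * 1) y :=
    hasDerivAt_Tx_comp (hasDerivAt_const y x) (hasDerivAt_id y) h1 h2 h3
  have hB2 : HasDerivAt (fun t => Ty x t) (Tyu x y * 0 + Tyv x y * 1) y :=
    hasDerivAt_Ty_comp (hasDerivAt_const y x) (hasDerivAt_id y) h4 h3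
  have hD1 : HasDerivAt (fun s => T2x s y)
      (Txu u v * (Txu x y * 1 + Txv x y * 0) + Txv u v * (Tyu x y * 1 + Tyv x y * 0)) x :=
    hasDerivAt_Tx_comp hA1 hB1 h1' h2' h3'
  have hD2 : HasDerivAt (fun t => T2x x t)
      (Txu u v * (Txu x y * 0 + Txv x y * 1) + Txv u v * (Tyu x y * 0 + Tyv x y * 1)) y :=
    hasDerivAt_Tx_comp hA2 hB2 h1' h2' h3'
  have hD3 : HasDerivAt (fun s => T2y s y)
      (Tyu u v * (Txu x y * 1 + Txv x y * 0) + Tyv u v * (Tyu x y * 1 + Tyv x y * 0)) x :=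
    hasDerivAt_Ty_comp hA1 hB1 h4' h3'
  have hD4 : HasDerivAt (fun t => T2y x t)
      (Tyu u v * (Txu x y * 0 + Txv x y * 1) + Tyv u v * (Tyu x y * 0 + Tyv x y * 1)) y :=
    hasDerivAt_Ty_comp hA2 hB2 h4' h3'
  have hJac : Jac x y =
      (Txu u v * Tyv u v - Txv u v * Tyu u v) * (Txu x y * Tyv x y - Txv x y * Tyu x y) := by
    rw [Jac, hD1.deriv, hD2.deriv, hD3.deriv, hD4.deriv]; ring
  rw [hJac, jac_one_step x y h1 h2 h3 h4, jac_one_step u v h1' h2' h3' h4']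
  rw [hT2x, hT2y]
  rw [assemble u v _ h1' h2' h3' h4' hvne hwne hzne hsne]
  have hP : (1 + u) * ((1 + v) * (1 + u + v)) ≠ 0 :=
    mul_ne_zero h1' (mul_ne_zero hvne hsne)
  rw [div_eq_div_iff hP (mul_ne_zero hx hy)]
  rw [hu, hv]; simp only [Tx, Ty]
  field_simp
  ring
end

section
/- Let x, y be nonzero reals with x + y + 1 ≠ 0, and set a_1 = y, a_2 = (1+x+y)/(xy), a_3 = x, a_4 = (1+y)/x, a_5 = (1+x)/y. Then the product a_1a_2a_3a_4a_5 equals (x+1)(y+1)(x+y+1)/(xy), and moreover a_1+a_2+a_3+a_4+a_5 + 3 = a_1a_2a_3a_4a_5. -/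
/-- The product of the frieze coordinates of a pentagon equals the invariant
`I(x,y)`, and also equals their sum plus 3. -/
theorem stmt8 (x y : ℝ) (hx : x ≠ 0) (hy : y ≠ 0) (hxy : x + y + 1 ≠ 0)
    (a1 a2 a3 a4 a5 : ℝ)
    (h1 : a1 = y) (h2 : a2 = (1 + x + y) / (x * y)) (h3 : a3 = x)
    (h4 : a4 = (1 + y) / x) (h5 : a5 = (1 + x) / y) :
    a1 * a2 * a3 * a4 * a5 = (x + 1) * (y + 1) * (x + y + 1) / (x * y) ∧
    a1 + a2 + a3 + a4 + a5 + 3 = a1 * a2 * a3 * a4 * a5 := by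
  subst h1 h2 h3 h4 h5
  constructor <;> field_simp <;> ring
end

section
/- Let P_1,…,P_5 ∈ ℝ³ be a unimodular pentagon (det of each consecutive triple equals 1, indices mod 5) with recurrence P_{i+2} = a_{i+1}P_{i+1} − b_iP_i + P_{i−1}. Then b_i = a_{i+3} and a_i + 1 = a_{i+2}a_{i+3} for all i. -/
/-- For a unimodular pentagon with recurrence
`P_{i+2} = a_{i+1}P_{i+1} - b_iP_i + P_{i-1}` one has `b_i = a_{i+3}` and
`a_i + 1 = a_{i+2} a_{i+3}`. -/
theorem stmt10 (P : ZMod 5 → Fin 3 → ℝ) (a b : ZMod 5 → ℝ)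
    (hdet : ∀ i : ZMod 5, Matrix.det (Matrix.of ![P (i - 1), P i, P (i + 1)]) = 1)
    (hrec : ∀ i : ZMod 5, P (i + 2) = a (i + 1) • P (i + 1) - b i • P i + P (i - 1)) :
    ∀ i : ZMod 5, b i = a (i + 3) ∧ a i + 1 = a (i + 2) * a (i + 3) := by
  have n1 : ∀ j : ZMod 5, j + 4 + 2 = j + 1 := by decide
  have n2 : ∀ j : ZMod 5, j + 4 + 1 = j := by decide
  have n3 : ∀ j : ZMod 5, j + 4 - 1 = j + 3 := by decide
  have n4 : ∀ j : ZMod 5, j - 1 = j + 4 := by decide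
  have n5 : ∀ j : ZMod 5, j + 3 - 1 = j + 2 := by decide
  have n6 : ∀ j : ZMod 5, j + 3 + 1 = j + 4 := by decide
  have n7 : ∀ j : ZMod 5, j + 1 + 2 = j + 3 := by decide
  have n8 : ∀ j : ZMod 5, j + 1 + 1 = j + 2 := by decide
  have n9 : ∀ j : ZMod 5, j + 1 - 1 = j := by decide
  have n10 : ∀ j : ZMod 5, j + 2 + 2 = j + 4 := by decide
  have n11 : ∀ j : ZMod 5, j + 2 + 1 = j + 3 := by decide
  have n12 : ∀ j : ZMod 5, j + 2 - 1 = j + 1 := by decide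
  have n13 : ∀ j : ZMod 5, j + 3 + 2 = j := by decide
  have n14 : ∀ j : ZMod 5, j + 3 + 4 = j + 2 := by decide
  have n15 : ∀ j : ZMod 5, j + 3 + 3 = j + 1 := by decide
  have n16 : ∀ j : ZMod 5, j + 4 + 3 = j + 2 := by decide
  have n17 : ∀ j : ZMod 5, j + 4 + 4 = j + 3 := by decide
  -- E1 : b i = a i * a (i+1) - 1
  have E1 : ∀ i : ZMod 5, b i = a i * a (i + 1) - 1 := by
    intro i
    have h1 := hrec (i + 4)
    rw [n1 i, n2 i, n3 i] at h1
    have h2 := hrec i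
    rw [n4 i, h1] at h2
    have hd := hdet (i + 3)
    rw [n5 i, n6 i, h2] at hd
    have hd0 := hdet (i + 4)
    rw [n3 i, n2 i] at hd0
    simp only [Matrix.det_fin_three, Matrix.of_apply, Matrix.cons_val', Matrix.cons_val_zero,
      Matrix.empty_val', Matrix.cons_val_fin_one, Matrix.cons_val_one, Matrix.head_cons,
      Matrix.head_fin_const, Matrix.cons_val_two, Matrix.tail_cons, Pi.add_apply, Pi.sub_apply,
      Pi.smul_apply, smul_eq_mul] at hd hd0
    linear_combination (a (i + 1) * a i - b i) * hd0 - hd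
  -- periodicity determinant relations
  have hVdet : ∀ i : ZMod 5,
      a (i+4) * (a (i+2) * a (i+3) - b (i+2)) - a (i+2) * b (i+3) + 1 = 0 := by
    intro i
    have h2 := hrec i
    rw [n4 i] at h2
    have h3 := hrec (i+1)
    rw [n7 i, n8 i, n9 i, h2] at h3
    have h4 := hrec (i+2)
    rw [n10 i, n11 i, n12 i, h3, h2] at h4
    have h5 := hrec (i+3)
    rw [n13 i, n6 i, n5 i, h4, h3, h2] at h5
    have hz := congrArg (fun v => Matrix.det (Matrix.of ![v, P i, P (i+1)])) h5
    have hd0 := hdet i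
    rw [n4 i] at hd0
    simp only [Matrix.det_fin_three, Matrix.of_apply, Matrix.cons_val', Matrix.cons_val_zero,
      Matrix.empty_val', Matrix.cons_val_fin_one, Matrix.cons_val_one, Matrix.head_cons,
      Matrix.head_fin_const, Matrix.cons_val_two, Matrix.tail_cons, Pi.add_apply, Pi.sub_apply,
      Pi.smul_apply, smul_eq_mul] at hz hd0
    linear_combination -hz - (a (i+4) * (a (i+2) * a (i+3) - b (i+2)) - a (i+2) * b (i+3) + 1) * hd0
  have hVdet3 : ∀ i : ZMod 5,
      a (i+4) * (a (i+3) * (a (i+1) * a (i+2) - b (i+1)) - a (i+1) * b (i+2) + 1)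
        - b (i+3) * (a (i+1) * a (i+2) - b (i+1)) + a (i+1) = 0 := by
    intro i
    have h2 := hrec i
    rw [n4 i] at h2
    have h3 := hrec (i+1)
    rw [n7 i, n8 i, n9 i, h2] at h3
    have h4 := hrec (i+2)
    rw [n10 i, n11 i, n12 i, h3, h2] at h4
    have h5 := hrec (i+3)
    rw [n13 i, n6 i, n5 i, h4, h3, h2] at h5
    have hz := congrArg (fun v => Matrix.det (Matrix.of ![P (i+4), P i, v])) h5
    have hd0 := hdet i
    rw [n4 i] at hd0
    simp only [Matrix.det_fin_three, Matrix.of_apply, Matrix.cons_val', Matrix.cons_val_zero,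
      Matrix.empty_val', Matrix.cons_val_fin_one, Matrix.cons_val_one, Matrix.head_cons,
      Matrix.head_fin_const, Matrix.cons_val_two, Matrix.tail_cons, Pi.add_apply, Pi.sub_apply,
      Pi.smul_apply, smul_eq_mul] at hz hd0
    linear_combination -hz - (a (i+4) * (a (i+3) * (a (i+1) * a (i+2) - b (i+1)) - a (i+1) * b (i+2) + 1)
        - b (i+3) * (a (i+1) * a (i+2) - b (i+1)) + a (i+1)) * hd0
  -- G : a i a(i+1) a(i+2) = a i + a(i+2) + 1
  have G : ∀ i : ZMod 5, a i * a (i+1) * a (i+2) = a i + a (i+2) + 1 := by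
    intro i
    have h := hVdet (i+3)
    rw [n14 i, n13 i, n15 i] at h
    have e1 := E1 i
    have e2 := E1 (i+1)
    rw [n8 i] at e2
    rw [e1, e2] at h
    linear_combination -h
  -- G2 : a i + 1 = a (i+2) * a (i+3)
  have G2 : ∀ i : ZMod 5, a i + 1 = a (i+2) * a (i+3) := by
    intro i
    have h := hVdet3 (i+4)
    rw [n2 i, n1 i, n16 i, n17 i] at h
    have e0 := E1 i
    have e1 := E1 (i+1)
    rw [n8 i] at e1
    have e2 := E1 (i+2)
    rw [n11 i] at e2
    rw [e0, e1, e2] at h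
    linear_combination h + a (i+3) * G i
  intro i
  refine ⟨?_, G2 i⟩
  have g1 := G2 (i+3)
  rw [n13 i, n15 i] at g1
  linear_combination E1 i - g1
end

section
/- Let q_r(x,y) = (x+1)(y+1)(x+y+1) − rxy. If r > (11 + 5√5)/2 then the curve q_r = 0 has a connected component contained in the open positive quadrant {x > 0, y > 0}. For instance, for r = 40/3 the point (3,4) lies on q_r = 0 with both coordinates positive, while no point of the curve lies on the coordinate axes other than (−1,0) and (0,−1). -/
/-- Defining polynomial of the level curve `I = r`. -/
def qpol (r x y : ℝ) : ℝ := (x + 1) * (y + 1) * (x + y + 1) - r * x * y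

/-- For `r > (11 + 5√5)/2` the curve `q_r = 0` has a connected component
contained in the open positive quadrant.  Concretely, `I(3,4) = 40/3` so
`(3,4)` lies on the curve for `r = 40/3`, while the only points of any level
curve on the coordinate axes are `(-1,0)` and `(0,-1)`. -/
theorem stmt17 :
    (∀ r : ℝ, (11 + 5 * Real.sqrt 5) / 2 < r →
      ∃ p : ℝ × ℝ, qpol r p.1 p.2 = 0 ∧
        connectedComponentIn {z : ℝ × ℝ | qpol r z.1 z.2 = 0} p ⊆
          {z : ℝ × ℝ | 0 < z.1 ∧ 0 < z.2}) ∧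
    ((3 + 1) * (4 + 1) * (3 + 4 + 1) / (3 * 4) : ℝ) = 40 / 3 ∧
    qpol (40 / 3) 3 4 = 0 ∧ (0 : ℝ) < 3 ∧ (0 : ℝ) < 4 ∧
    (∀ r x y : ℝ, qpol r x y = 0 → (x = 0 → y = -1) ∧ (y = 0 → x = -1)) := by
  have hax : ∀ r x y : ℝ, qpol r x y = 0 → (x = 0 → y = -1) ∧ (y = 0 → x = -1) := by
    intro r x y h
    constructor
    · intro hx; subst hx
      simp only [qpol] at h
      nlinarith [sq_nonneg (y + 1)]
    · intro hy; subst hy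
      simp only [qpol] at h
      nlinarith [sq_nonneg (x + 1)]
  refine ⟨?_, by norm_num, by norm_num [qpol], by norm_num, by norm_num, hax⟩
  intro r hr
  set s : ℝ := Real.sqrt 5 with hs
  have hs2 : s ^ 2 = 5 := Real.sq_sqrt (by norm_num)
  have hs0 : 0 ≤ s := Real.sqrt_nonneg 5
  have hs1 : 2 < s := by nlinarith
  set φ : ℝ := (1 + s) / 2 with hφ
  have hφpos : 0 < φ := by rw [hφ]; linarith
  have hgφ : qpol r φ φ < 0 := by
    simp only [qpol, hφ]
    have hr' : (11 + 5 * s) / 2 < r := hr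
    nlinarith [hs2, hs1, sq_nonneg s]
  -- intermediate value on the diagonal
  have hcont : ContinuousOn (fun t : ℝ => qpol r t t) (Set.Icc 0 φ) := by
    simp only [qpol]; fun_prop
  have h0 : qpol r 0 0 = 1 := by norm_num [qpol]
  obtain ⟨t, ht, hgt⟩ : ∃ t ∈ Set.Icc (0:ℝ) φ, qpol r t t = 0 := by
    have := intermediate_value_Icc' (le_of_lt hφpos) hcont
    have h0mem : (0:ℝ) ∈ Set.Icc (qpol r φ φ) (qpol r 0 0) := by
      constructor <;> [linarith; simp [h0]]
    obtain ⟨t, htI, htv⟩ := this h0mem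
    exact ⟨t, htI, htv⟩
  have htpos : 0 < t := by
    rcases lt_or_eq_of_le ht.1 with h | h
    · exact h
    · exfalso; rw [← h] at hgt; rw [h0] at hgt; norm_num at hgt
  set S : Set (ℝ × ℝ) := {z : ℝ × ℝ | qpol r z.1 z.2 = 0} with hS
  set Q : Set (ℝ × ℝ) := {z : ℝ × ℝ | 0 < z.1 ∧ 0 < z.2} with hQ
  have hQopen : IsOpen Q := by
    have h1 : IsOpen {z : ℝ × ℝ | 0 < z.1} := isOpen_lt continuous_const continuous_fst
    have h2 : IsOpen {z : ℝ × ℝ | 0 < z.2} := isOpen_lt continuous_const continuous_snd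
    exact h1.inter h2
  set C : Set (ℝ × ℝ) := {z : ℝ × ℝ | 0 ≤ z.1 ∧ 0 ≤ z.2} with hC
  have hCclosed : IsClosed C := by
    have h1 : IsClosed {z : ℝ × ℝ | 0 ≤ z.1} := isClosed_le continuous_const continuous_fst
    have h2 : IsClosed {z : ℝ × ℝ | 0 ≤ z.2} := isClosed_le continuous_const continuous_snd
    exact h1.inter h2
  have hclosQ : closure Q ⊆ C := by
    apply closure_minimal _ hCclosed
    intro z hz
    exact ⟨le_of_lt hz.1, le_of_lt hz.2⟩
  have hkey : ∀ z ∈ S, z ∈ C → z ∈ Q := by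
    intro z hzS hzC
    rcases lt_or_eq_of_le hzC.1 with h1 | h1
    · rcases lt_or_eq_of_le hzC.2 with h2 | h2
      · exact ⟨h1, h2⟩
      · exfalso
        have := (hax r z.1 z.2 hzS).2 h2.symm
        linarith
    · exfalso
      have := (hax r z.1 z.2 hzS).1 h1.symm
      linarith [hzC.2, this]
  have hpS : (t, t) ∈ S := hgt
  have hpQ : (t, t) ∈ Q := ⟨htpos, htpos⟩
  refine ⟨(t, t), hgt, ?_⟩
  set T := connectedComponentIn S (t, t) with hT
  have hTsub : T ⊆ S := connectedComponentIn_subset S (t, t)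
  have hTpre : IsPreconnected T := isPreconnected_connectedComponentIn
  have hpT : (t, t) ∈ T := mem_connectedComponentIn hpS
  set U : Set (ℝ × ℝ) := (closure Q)ᶜ with hU
  have hUopen : IsOpen U := isClosed_closure.isOpen_compl
  have hcover : T ⊆ Q ∪ U := by
    intro z hz
    by_cases hzc : z ∈ closure Q
    · exact Or.inl (hkey z (hTsub hz) (hclosQ hzc))
    · exact Or.inr hzc
  intro z hz
  rcases hcover hz with h | h
  · exact h
  · exfalso
    have hnon : (T ∩ (Q ∩ U)).Nonempty :=
      hTpre Q U hQopen hUopen hcover ⟨(t, t), hpT, hpQ⟩ ⟨z, hz, h⟩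
    obtain ⟨w, _, hwQ, hwU⟩ := hnon
    exact hwU (subset_closure hwQ)
end

section
/- Write x = u − 1 and y = αu² + β(u)u³ where α ≠ 0 is a constant and β is bounded near u = 0, and let X(x,y) = ( (1+x)(1+x−y²)/y , (1+y)(−1−y+x²)/x ). Then X·X = (1/((u−1)²(α+βu)²))·(1 − 2u + O(u²)) as u → 0; in particular ‖X‖ → 1/|α| as u → 0. -/
/-- First component of the Hamiltonian vector field of `I` w.r.t. `ω = dx∧dy/(xy)`. -/
noncomputable def X1 (x y : ℝ) : ℝ := (1 + x) * (1 + x - y ^ 2) / y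

/-- Second component of the Hamiltonian vector field. -/
noncomputable def X2 (x y : ℝ) : ℝ := (1 + y) * (-1 - y + x ^ 2) / x

/-- Square norm of the field. -/
noncomputable def XdotX (x y : ℝ) : ℝ := X1 x y ^ 2 + X2 x y ^ 2

noncomputable def Gpoly (u c : ℝ) : ℝ :=
  1 + u * c ^ 2 * (-2 + u ^ 3 * c ^ 2) * (1 - 2 * u + u ^ 2)
    + c ^ 2 * (1 + u ^ 2 * c) ^ 2 * (2 - u + u * c) ^ 2

lemma key (u c : ℝ) (hu : u ≠ 0) (hu1 : u - 1 ≠ 0) (hc : c ≠ 0) :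
    XdotX (u - 1) (u ^ 2 * c) * ((u - 1) ^ 2 * c ^ 2)
      = 1 - 2 * u + u ^ 2 * Gpoly u c := by
  have hy : u ^ 2 * c ≠ 0 := by positivity
  unfold XdotX X1 X2 Gpoly
  field_simp
  ring

lemma Gbound (u c B : ℝ) (hu : |u| ≤ 1) (hc : |c| ≤ B) :
    |Gpoly u c| ≤ 1 + 4 * B ^ 2 * (2 + B ^ 2) + B ^ 2 * (1 + B) ^ 2 * (3 + B) ^ 2 := by
  have hB : 0 ≤ B := le_trans (abs_nonneg c) hc
  have hc2 : |c| ^ 2 ≤ B ^ 2 := by gcongr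
  have hu2 : |u| ^ 2 ≤ 1 := by
    have : |u| ^ 2 ≤ 1 ^ 2 := by gcongr
    simpa using this
  have hu3 : |u| ^ 3 ≤ 1 := by
    have : |u| ^ 3 ≤ 1 ^ 3 := by gcongr
    simpa using this
  have e1 : |(-2 : ℝ) + u ^ 3 * c ^ 2| ≤ 2 + B ^ 2 := by
    have : |(-2 : ℝ) + u ^ 3 * c ^ 2| ≤ |(-2 : ℝ)| + |u| ^ 3 * |c| ^ 2 := by
      rw [← abs_pow, ← abs_pow, ← abs_mul]; exact abs_add_le _ _
    refine this.trans ?_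
    rw [abs_neg, abs_two]
    nlinarith
  have e2 : |1 - 2 * u + u ^ 2| ≤ 4 := by
    have t1 : |1 - 2 * u + u ^ 2| ≤ |1 - 2 * u| + |u| ^ 2 := by
      rw [← abs_pow]; exact abs_add_le _ _
    have t2 : |1 - 2 * u| ≤ 1 + 2 * |u| := by
      refine (abs_sub _ _).trans ?_
      rw [abs_one, abs_mul, abs_two]
    have := abs_nonneg u
    nlinarith
  have h1 : |u * c ^ 2 * (-2 + u ^ 3 * c ^ 2) * (1 - 2 * u + u ^ 2)|
      ≤ 1 * B ^ 2 * (2 + B ^ 2) * 4 := by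
    rw [abs_mul, abs_mul, abs_mul, abs_pow]
    gcongr <;> first | positivity | assumption
  have e3 : |1 + u ^ 2 * c| ≤ 1 + B := by
    have : |1 + u ^ 2 * c| ≤ |(1:ℝ)| + |u| ^ 2 * |c| := by
      rw [← abs_pow, ← abs_mul]; exact abs_add_le _ _
    refine this.trans ?_
    rw [abs_one]
    nlinarith [abs_nonneg c]
  have e4 : |2 - u + u * c| ≤ 3 + B := by
    have t1 : |2 - u + u * c| ≤ |2 - u| + |u| * |c| := by
      rw [← abs_mul]; exact abs_add_le _ _
    have t2 : |2 - u| ≤ 2 + |u| := by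
      refine (abs_sub _ _).trans ?_
      rw [abs_two]
    nlinarith [abs_nonneg c, abs_nonneg u]
  have h2 : |c ^ 2 * (1 + u ^ 2 * c) ^ 2 * (2 - u + u * c) ^ 2|
      ≤ B ^ 2 * (1 + B) ^ 2 * (3 + B) ^ 2 := by
    rw [abs_mul, abs_mul, abs_pow, abs_pow, abs_pow]
    gcongr <;> first | positivity | assumption
  have t : |Gpoly u c| ≤ 1 + |u * c ^ 2 * (-2 + u ^ 3 * c ^ 2) * (1 - 2 * u + u ^ 2)|
      + |c ^ 2 * (1 + u ^ 2 * c) ^ 2 * (2 - u + u * c) ^ 2| := by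
    unfold Gpoly
    refine (abs_add_le _ _).trans ?_
    have := abs_add_le (1 : ℝ) (u * c ^ 2 * (-2 + u ^ 3 * c ^ 2) * (1 - 2 * u + u ^ 2))
    rw [abs_one] at this
    linarith
  linarith

/-- Local expansion of `X·X` near the point `(-1,0)` along the curve
`x = u - 1`, `y = αu² + β(u)u³`:
`X·X = (1/((u-1)²(α+β(u)u)²))·(1 - 2u + O(u²))`, so `‖X‖ → 1/|α|` as `u → 0`. -/
theorem stmt19 (α : ℝ) (hα : α ≠ 0) (β : ℝ → ℝ)
    (hβ : ∃ M δ : ℝ, 0 < δ ∧ ∀ u : ℝ, |u| < δ → |β u| ≤ M) :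
    (∃ C ε : ℝ, 0 < ε ∧ ∀ u : ℝ, u ≠ 0 → |u| < ε →
      |XdotX (u - 1) (α * u ^ 2 + β u * u ^ 3) *
          ((u - 1) ^ 2 * (α + β u * u) ^ 2) - (1 - 2 * u)| ≤ C * u ^ 2) ∧
    Filter.Tendsto (fun u => Real.sqrt (XdotX (u - 1) (α * u ^ 2 + β u * u ^ 3)))
      (nhdsWithin 0 {(0 : ℝ)}ᶜ) (nhds (1 / |α|)) := by
  obtain ⟨M, δ, hδ, hM⟩ := hβ
  have hM0 : 0 ≤ M := le_trans (abs_nonneg (β 0)) (hM 0 (by simpa using hδ))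
  set B : ℝ := |α| + M with hB
  have hB0 : 0 < B := by
    have := abs_pos.mpr hα
    simp only [hB]; linarith
  set C : ℝ := 1 + 4 * B ^ 2 * (2 + B ^ 2) + B ^ 2 * (1 + B) ^ 2 * (3 + B) ^ 2 with hC
  set ε : ℝ := min (min 1 δ) (|α| / (M + 1)) with hε
  have hε0 : 0 < ε := by
    have := abs_pos.mpr hα
    refine lt_min (lt_min one_pos hδ) (by positivity)
  -- main pointwise estimate
  have main : ∀ u : ℝ, u ≠ 0 → |u| < ε →
      |XdotX (u - 1) (α * u ^ 2 + β u * u ^ 3) *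
          ((u - 1) ^ 2 * (α + β u * u) ^ 2) - (1 - 2 * u)| ≤ C * u ^ 2 := by
    intro u hu huε
    have hu1 : |u| < 1 := lt_of_lt_of_le huε (le_trans (min_le_left _ _) (min_le_left _ _))
    have huδ : |u| < δ := lt_of_lt_of_le huε (le_trans (min_le_left _ _) (min_le_right _ _))
    have huα : |u| < |α| / (M + 1) := lt_of_lt_of_le huε (min_le_right _ _)
    set c : ℝ := α + β u * u with hcdef
    have hβu : |β u| ≤ M := hM u huδ
    have hbu : |β u * u| < |α| := by
      rw [abs_mul]
      calc |β u| * |u| ≤ M * |u| := by gcongr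
      _ < |α| := by
          have h1 : M * |u| < M * (|α| / (M + 1)) + |α| / (M + 1) * 1 := by
            nlinarith [abs_nonneg u, abs_pos.mpr hα]
          have h2 : M * (|α| / (M + 1)) + |α| / (M + 1) * 1 = |α| := by
            field_simp
          linarith
    have hc : c ≠ 0 := by
      intro h
      have h' : α + β u * u = 0 := hcdef ▸ h
      have : |β u * u| = |α| := by
        have : β u * u = -α := by linarith
        rw [this, abs_neg]
      linarith
    have hcB : |c| ≤ B := by
      have : |c| ≤ |α| + |β u * u| := abs_add_le _ _
      have h2 : |β u * u| ≤ M := by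
        rw [abs_mul]
        calc |β u| * |u| ≤ M * 1 := by
              apply mul_le_mul hβu (le_of_lt hu1) (abs_nonneg u) hM0
        _ = M := mul_one M
      simp only [hB]; linarith
    have hym : α * u ^ 2 + β u * u ^ 3 = u ^ 2 * c := by rw [hcdef]; ring
    have hu1' : u - 1 ≠ 0 := by
      intro h
      have : u = 1 := by linarith
      rw [this] at hu1; simp at hu1
    rw [hym, key u c hu hu1' hc]
    have : 1 - 2 * u + u ^ 2 * Gpoly u c - (1 - 2 * u) = u ^ 2 * Gpoly u c := by ring
    rw [this, abs_mul, abs_pow, sq_abs]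
    rw [mul_comm C (u ^ 2)]
    exact mul_le_mul_of_nonneg_left (Gbound u c B (le_of_lt hu1) hcB) (sq_nonneg u)
  constructor
  · exact ⟨C, ε, hε0, main⟩
  · -- tendsto part
    set 𝓕 := nhdsWithin (0 : ℝ) {(0 : ℝ)}ᶜ with h𝓕
    have hle : 𝓕 ≤ nhds 0 := nhdsWithin_le_nhds
    have hev : ∀ᶠ u in 𝓕, u ≠ 0 ∧ |u| < ε := by
      have h1 : ∀ᶠ u in nhds (0:ℝ), |u| < ε := by
        have := Metric.ball_mem_nhds (0:ℝ) hε0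
        filter_upwards [this] with u hu
        simpa [Real.dist_eq] using hu
      have h2 : ∀ᶠ u in 𝓕, u ≠ 0 := eventually_mem_nhdsWithin.mono (fun u hu => hu)
      filter_upwards [hle h1, h2] with u h1 h2 using ⟨h2, h1⟩
    -- tendsto of c
    have hc_tendsto : Filter.Tendsto (fun u => α + β u * u) 𝓕 (nhds α) := by
      have h0 : Filter.Tendsto (fun u : ℝ => β u * u) 𝓕 (nhds 0) := by
        apply squeeze_zero_norm' (a := fun u => M * |u|)
        · filter_upwards [hev] with u ⟨hu, huε⟩
          have huδ : |u| < δ := lt_of_lt_of_le huε (le_trans (min_le_left _ _) (min_le_right _ _))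
          rw [Real.norm_eq_abs, abs_mul]
          exact mul_le_mul_of_nonneg_right (hM u huδ) (abs_nonneg u)
        · have : Filter.Tendsto (fun u : ℝ => M * |u|) (nhds 0) (nhds (M * |(0:ℝ)|)) :=
            (continuous_const.mul continuous_abs).tendsto 0
          simpa using this.mono_left hle
      have := Filter.Tendsto.const_add α h0
      simpa using this
    -- tendsto of g := (u-1)^2 * c^2 to α^2
    have hg_tendsto : Filter.Tendsto (fun u => (u - 1) ^ 2 * (α + β u * u) ^ 2) 𝓕
        (nhds (α ^ 2)) := by
      have h1 : Filter.Tendsto (fun u : ℝ => (u - 1) ^ 2) 𝓕 (nhds 1) := by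
        have : Filter.Tendsto (fun u : ℝ => (u - 1) ^ 2) (nhds 0) (nhds (((0:ℝ) - 1) ^ 2)) :=
          ((continuous_id.sub continuous_const).pow 2).tendsto 0
        simpa using this.mono_left hle
      have := h1.mul (hc_tendsto.pow 2)
      simpa using this
    -- tendsto of F to 1
    have hF_tendsto : Filter.Tendsto (fun u => XdotX (u - 1) (α * u ^ 2 + β u * u ^ 3) *
        ((u - 1) ^ 2 * (α + β u * u) ^ 2)) 𝓕 (nhds 1) := by
      have hdiff : Filter.Tendsto (fun u => XdotX (u - 1) (α * u ^ 2 + β u * u ^ 3) *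
          ((u - 1) ^ 2 * (α + β u * u) ^ 2) - (1 - 2 * u)) 𝓕 (nhds 0) := by
        apply squeeze_zero_norm' (a := fun u => C * u ^ 2)
        · filter_upwards [hev] with u ⟨hu, huε⟩
          rw [Real.norm_eq_abs]
          exact main u hu huε
        · have : Filter.Tendsto (fun u : ℝ => C * u ^ 2) (nhds 0) (nhds (C * 0 ^ 2)) :=
            (continuous_const.mul (continuous_id.pow 2)).tendsto 0
          simpa using this.mono_left hle
      have hlin : Filter.Tendsto (fun u : ℝ => 1 - 2 * u) 𝓕 (nhds 1) := by
        have : Filter.Tendsto (fun u : ℝ => 1 - 2 * u) (nhds 0) (nhds (1 - 2 * 0)) :=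
          (continuous_const.sub (continuous_const.mul continuous_id)).tendsto 0
        simpa using this.mono_left hle
      have := hdiff.add hlin
      simp only [zero_add] at this
      convert this using 2 with u
      ring
    have hα2 : (α : ℝ) ^ 2 ≠ 0 := pow_ne_zero 2 hα
    have hXdot : Filter.Tendsto (fun u => XdotX (u - 1) (α * u ^ 2 + β u * u ^ 3)) 𝓕
        (nhds (1 / α ^ 2)) := by
      have hprod := hF_tendsto.mul (hg_tendsto.inv₀ hα2)
      have heq : ∀ᶠ u in 𝓕, XdotX (u - 1) (α * u ^ 2 + β u * u ^ 3) *
          ((u - 1) ^ 2 * (α + β u * u) ^ 2) * ((u - 1) ^ 2 * (α + β u * u) ^ 2)⁻¹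
          = XdotX (u - 1) (α * u ^ 2 + β u * u ^ 3) := by
        filter_upwards [hev] with u ⟨hu, huε⟩
        have hu1 : |u| < 1 := lt_of_lt_of_le huε (le_trans (min_le_left _ _) (min_le_left _ _))
        have huδ : |u| < δ := lt_of_lt_of_le huε (le_trans (min_le_left _ _) (min_le_right _ _))
        have huα : |u| < |α| / (M + 1) := lt_of_lt_of_le huε (min_le_right _ _)
        have hu1' : u - 1 ≠ 0 := by
          intro h
          have : u = 1 := by linarith
          rw [this] at hu1; simp at hu1
        have hc : α + β u * u ≠ 0 := by
          intro h
          have hb : |β u * u| = |α| := by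
            have : β u * u = -α := by linarith
            rw [this, abs_neg]
          have : |β u * u| < |α| := by
            rw [abs_mul]
            calc |β u| * |u| ≤ M * |u| := by
                  exact mul_le_mul_of_nonneg_right (hM u huδ) (abs_nonneg u)
            _ < |α| := by
                have h1 : M * |u| < M * (|α| / (M + 1)) + |α| / (M + 1) * 1 := by
                  nlinarith [abs_nonneg u, abs_pos.mpr hα]
                have h2 : M * (|α| / (M + 1)) + |α| / (M + 1) * 1 = |α| := by
                  field_simp
                linarith
          linarith
        have hgne : (u - 1) ^ 2 * (α + β u * u) ^ 2 ≠ 0 :=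
          mul_ne_zero (pow_ne_zero _ hu1') (pow_ne_zero _ hc)
        rw [mul_assoc, mul_inv_cancel₀ hgne, mul_one]
      have := hprod.congr' heq
      simpa [one_div] using this
    have hsqrt := hXdot.sqrt
    have : Real.sqrt (1 / α ^ 2) = 1 / |α| := by
      rw [one_div, Real.sqrt_inv, Real.sqrt_sq_eq_abs, one_div]
    rwa [this] at hsqrt
end
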